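/- Types furnish finite counterexamples for fixpoints: let D be a term, z a variable, and fix x.M a closed fixpoint term with D[fix x.M/z] closed. Then (i) for every type A, if D[fix x.M/z] ∉ T̄⟦A⟧ then there exists n₀ ∈ ℕ such that for all n ≥ n₀, D[fixⁿ x.M/z] ∉ T̄⟦A⟧; and (ii) for every finitely verifiable type F, if D[fix x.M/z] ∈ T⟦F⟧ then there exists n₀ ∈ ℕ such that for all n ≥ n₀, D[fixⁿ x.M/z] ∈ T⟦F⟧. -/

import Mathlib

namespace PCF

/-- Terms of the simple CBV, PCF-like language.  Variables are natural numbers. -/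
inductive Tm : Type
  | var : ℕ → Tm
  | zero : Tm
  | succ : Tm → Tm
  | pred : Tm → Tm
  | ifz : Tm → Tm → Tm → Tm
  | abs : ℕ → Tm → Tm
  | app : Tm → Tm → Tm
  | fix : ℕ → Tm → Tm
  | pair : Tm → Tm → Tm
  | lett : ℕ → ℕ → Tm → Tm → Tm
  deriving DecidableEq

/-- The numeral `succ^n(zero)`. -/
def numeral : ℕ → Tm
  | 0 => .zero
  | n + 1 => .succ (numeral n)

/-- Values. -/
inductive IsValue : Tm → Prop
  | var (x : ℕ) : IsValue (.var x)
  | num (n : ℕ) : IsValue (numeral n)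
  | pair {V W : Tm} : IsValue V → IsValue W → IsValue (.pair V W)
  | abs (x : ℕ) (M : Tm) : IsValue (.abs x M)

/-- Capture-permitting substitution `M[N/x]` (adequate since we only ever
substitute closed terms). -/
def subst (x : ℕ) (N : Tm) : Tm → Tm
  | .var y => if y = x then N else .var y
  | .zero => .zero
  | .succ M => .succ (subst x N M)
  | .pred M => .pred (subst x N M)
  | .ifz M P Q => .ifz (subst x N M) (subst x N P) (subst x N Q)
  | .abs y M => if y = x then .abs y M else .abs y (subst x N M)
  | .app M P => .app (subst x N M) (subst x N P)
  | .fix y M => if y = x then .fix y M else .fix y (subst x N M)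
  | .pair M P => .pair (subst x N M) (subst x N P)
  | .lett y z M P =>
      .lett y z (subst x N M) (if y = x ∨ z = x then P else subst x N P)

/-- Free variables. -/
def fv : Tm → Finset ℕ
  | .var y => {y}
  | .zero => ∅
  | .succ M => fv M
  | .pred M => fv M
  | .ifz M P Q => fv M ∪ fv P ∪ fv Q
  | .abs y M => fv M \ {y}
  | .app M P => fv M ∪ fv P
  | .fix y M => fv M \ {y}
  | .pair M P => fv M ∪ fv P
  | .lett y z M P => fv M ∪ (fv P \ {y, z})

def ClosedTm (M : Tm) : Prop := fv M = ∅

/-- One-step call-by-value reduction (closure of the redex rules under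
evaluation contexts). -/
inductive Step : Tm → Tm → Prop
  | ifz_zero {N P : Tm} : Step (.ifz (numeral 0) N P) N
  | ifz_succ {n : ℕ} {N P : Tm} : Step (.ifz (numeral (n + 1)) N P) P
  | lett_beta {x y : ℕ} {V W M : Tm} : IsValue V → IsValue W →
      Step (.lett x y (.pair V W) M) (subst y W (subst x V M))
  | fix_step {x : ℕ} {M : Tm} : Step (.fix x M) (subst x (.fix x M) M)
  | pred_zero : Step (.pred (numeral 0)) (numeral 0)
  | pred_succ {n : ℕ} : Step (.pred (numeral (n + 1))) (numeral n)
  | beta {x : ℕ} {M V : Tm} : IsValue V → Step (.app (.abs x M) V) (subst x V M)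
  | succ_ctx {M M' : Tm} : Step M M' → Step (.succ M) (.succ M')
  | pred_ctx {M M' : Tm} : Step M M' → Step (.pred M) (.pred M')
  | pair_left {M M' N : Tm} : Step M M' → Step (.pair M N) (.pair M' N)
  | pair_right {V N N' : Tm} : IsValue V → Step N N' → Step (.pair V N) (.pair V N')
  | lett_ctx {x y : ℕ} {M M' N : Tm} : Step M M' → Step (.lett x y M N) (.lett x y M' N)
  | ifz_ctx {M M' N P : Tm} : Step M M' → Step (.ifz M N P) (.ifz M' N P)
  | app_right {x : ℕ} {M N N' : Tm} : Step N N' →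
      Step (.app (.abs x M) N) (.app (.abs x M) N')
  | app_left {M M' N : Tm} : Step M M' → Step (.app M N) (.app M' N)

/-- Many-step reduction. -/
def Steps : Tm → Tm → Prop := Relation.ReflTransGen Step

def NormalForm (M : Tm) : Prop := ¬ ∃ N, Step M N

def Evaluates (M : Tm) : Prop := ∃ V, Steps M V ∧ IsValue V

/-- `M` diverges: it has no normal form. -/
def Diverges (M : Tm) : Prop := ¬ ∃ N, Steps M N ∧ NormalForm N

def Stuck (M : Tm) : Prop := NormalForm M ∧ ¬ IsValue M

def GoesWrong (M : Tm) : Prop := ∃ P, Steps M P ∧ Stuck P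

/-- `div` = `fix x. x`. -/
def divTm : Tm := .fix 0 (.var 0)

/-- `P ≲ N`: if `P` reduces to a normal form then `N` reduces to the same
normal form. -/
def RefBelow (P N : Tm) : Prop := ∀ R, Steps P R → NormalForm R → Steps N R

/-- Fixpoint approximants. -/
def fixApprox (x : ℕ) (M : Tm) : ℕ → Tm
  | 0 => divTm
  | n + 1 => subst x (fixApprox x M n) M

/-- Finitely verifiable types. -/
inductive FTy : Type
  | nat : FTy
  | prod : FTy → FTy → FTy
  deriving DecidableEq

/-- Types: `Nat | A×B | A→B | A⇝F | Ok` (necessity arrows only to finitely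
verifiable types). -/
inductive Ty : Type
  | nat : Ty
  | prod : Ty → Ty → Ty
  | arrow : Ty → Ty → Ty
  | narrow : Ty → FTy → Ty
  | ok : Ty
  deriving DecidableEq

/-- Inclusion of finitely verifiable types into types. -/
def FTy.toTy : FTy → Ty
  | .nat => .nat
  | .prod A B => .prod A.toTy B.toTy

/-- `T⟦·⟧` applied to a set of values: the terms that evaluate into it. -/
def TSem (Sv : Tm → Prop) (M : Tm) : Prop :=
  ClosedTm M ∧ ∃ V, Steps M V ∧ IsValue V ∧ Sv V

/-- `T̄⟦·⟧`: evaluate into the set, or diverge. -/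
def TBarSem (Sv : Tm → Prop) (M : Tm) : Prop :=
  TSem Sv M ∨ (ClosedTm M ∧ Diverges M)

/-- Semantics of finitely verifiable types. -/
def FSem : FTy → Tm → Prop
  | .nat => fun M => ∃ n, M = numeral n
  | .prod A B => fun M => ∃ V W, M = .pair V W ∧ FSem A V ∧ FSem B W

/-- Semantics of types, as sets of closed values. -/
def Sem : Ty → Tm → Prop
  | .nat => fun M => ∃ n, M = numeral n
  | .prod A B => fun M => ∃ V W, M = .pair V W ∧ Sem A V ∧ Sem B W
  | .arrow A B => fun M => ∃ x P, M = .abs x P ∧ ClosedTm M ∧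
      ∀ V, ClosedTm V → IsValue V → Sem A V → TBarSem (Sem B) (subst x V P)
  | .narrow A F => fun M => ∃ x P, M = .abs x P ∧ ClosedTm M ∧
      ∀ V, ClosedTm V → IsValue V → TSem (FSem F) (subst x V P) → Sem A V
  | .ok => fun M => ClosedTm M ∧ IsValue M

/-- Typing formulas `M : A`. -/
structure Formula where
  tm : Tm
  ty : Ty
  deriving DecidableEq

/-- Make a formula. -/
def fm (M : Tm) (A : Ty) : Formula := ⟨M, A⟩

/-- `x` does not occur free in any formula of `Γ`. -/
def FreshFor (x : ℕ) (Γ : Finset Formula) : Prop := ∀ φ ∈ Γ, x ∉ fv φ.tm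

def IsArrowTy (A : Ty) : Prop :=
  (∃ B C, A = .arrow B C) ∨ (∃ B F, A = .narrow B F)

def IsProdTy (A : Ty) : Prop := ∃ B C, A = .prod B C

/-- Disjointness of types: one is `Nat` and the other is not, or one is an
arrow and the other is not, or one is a product and the other is not. -/
def Disj (A B : Ty) : Prop :=
  (A = .nat ∧ B ≠ .nat) ∨ (B = .nat ∧ A ≠ .nat) ∨
  (IsArrowTy A ∧ ¬ IsArrowTy B) ∨ (IsArrowTy B ∧ ¬ IsArrowTy A) ∨
  (IsProdTy A ∧ ¬ IsProdTy B) ∨ (IsProdTy B ∧ ¬ IsProdTy A)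

/-- The two-sided type system (including the `Ok` rules). -/
inductive Der : Finset Formula → Finset Formula → Prop
  | id (Γ Δ : Finset Formula) (x : ℕ) (A : Ty) :
      Der (insert (fm (.var x) A) Γ) (insert (fm (.var x) A) Δ)
  | dis {Γ Δ : Finset Formula} {M : Tm} {A B : Ty} :
      Disj A B → Der Γ (insert (fm M B) Δ) → Der (insert (fm M A) Γ) Δ
  | zeroR (Γ Δ : Finset Formula) : Der Γ (insert (fm .zero .nat) Δ)
  | succR {Γ Δ M} : Der Γ (insert (fm M .nat) Δ) → Der Γ (insert (fm (.succ M) .nat) Δ)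
  | predR {Γ Δ M} : Der Γ (insert (fm M .nat) Δ) → Der Γ (insert (fm (.pred M) .nat) Δ)
  | letR {Γ Δ : Finset Formula} {x y : ℕ} {M N : Tm} {A B C : Ty} :
      Der Γ (insert (fm M (.prod B C)) Δ) →
      Der (insert (fm (.var x) B) (insert (fm (.var y) C) Γ)) (insert (fm N A) Δ) →
      FreshFor x Γ → FreshFor x Δ → FreshFor y Γ → FreshFor y Δ →
      Der Γ (insert (fm (.lett x y M N) A) Δ)
  | appR {Γ Δ M N A B} :
      Der Γ (insert (fm M (.arrow B A)) Δ) → Der Γ (insert (fm N B) Δ) →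
      Der Γ (insert (fm (.app M N) A) Δ)
  | pairR {Γ Δ M N A B} :
      Der Γ (insert (fm M A) Δ) → Der Γ (insert (fm N B) Δ) →
      Der Γ (insert (fm (.pair M N) (.prod A B)) Δ)
  | absR {Γ Δ : Finset Formula} {x : ℕ} {M : Tm} {A B : Ty} :
      Der (insert (fm (.var x) B) Γ) (insert (fm M A) Δ) →
      FreshFor x Γ → FreshFor x Δ →
      Der Γ (insert (fm (.abs x M) (.arrow B A)) Δ)
  | abnR {Γ Δ : Finset Formula} {x : ℕ} {M : Tm} {B : Ty} {F : FTy} :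
      Der (insert (fm M F.toTy) Γ) (insert (fm (.var x) B) Δ) →
      FreshFor x Γ → FreshFor x Δ →
      Der Γ (insert (fm (.abs x M) (.narrow B F)) Δ)
  | fixR {Γ Δ : Finset Formula} {x : ℕ} {M : Tm} {A : Ty} :
      Der (insert (fm (.var x) A) Γ) (insert (fm M A) Δ) →
      FreshFor x Γ → FreshFor x Δ →
      Der Γ (insert (fm (.fix x M) A) Δ)
  | ifzR {Γ Δ M N P A} :
      Der Γ (insert (fm M .nat) Δ) → Der Γ (insert (fm N A) Δ) →
      Der Γ (insert (fm P A) Δ) →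
      Der Γ (insert (fm (.ifz M N P) A) Δ)
  | succL {Γ Δ M} : Der (insert (fm M .nat) Γ) Δ → Der (insert (fm (.succ M) .nat) Γ) Δ
  | predL {Γ Δ M} : Der (insert (fm M .nat) Γ) Δ → Der (insert (fm (.pred M) .nat) Γ) Δ
  | appL {Γ Δ : Finset Formula} {M N : Tm} {B : Ty} {A : FTy} :
      Der Γ (insert (fm M (.narrow B A)) Δ) → Der (insert (fm N B) Γ) Δ →
      Der (insert (fm (.app M N) A.toTy) Γ) Δ
  | pairL1 {Γ Δ M1 M2 A1 A2} : Der (insert (fm M1 A1) Γ) Δ →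
      Der (insert (fm (.pair M1 M2) (.prod A1 A2)) Γ) Δ
  | pairL2 {Γ Δ M1 M2 A1 A2} : Der (insert (fm M2 A2) Γ) Δ →
      Der (insert (fm (.pair M1 M2) (.prod A1 A2)) Γ) Δ
  | letL1 {Γ Δ : Finset Formula} {x y : ℕ} {M N : Tm} {A : Ty} :
      Der (insert (fm N A) Γ) Δ →
      FreshFor x Γ → FreshFor x Δ → FreshFor y Γ → FreshFor y Δ →
      Der (insert (fm (.lett x y M N) A) Γ) Δ
  | letL2 {Γ Δ : Finset Formula} {x y : ℕ} {M N : Tm} {A B1 B2 : Ty} :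
      Der (insert (fm M (.prod B1 B2)) Γ) Δ →
      Der (insert (fm N A) Γ) (insert (fm (.var x) B1) Δ) →
      Der (insert (fm N A) Γ) (insert (fm (.var y) B2) Δ) →
      FreshFor x Γ → FreshFor x Δ → FreshFor y Γ → FreshFor y Δ →
      Der (insert (fm (.lett x y M N) A) Γ) Δ
  | ifzL1 {Γ Δ M N P A} : Der (insert (fm M .nat) Γ) Δ →
      Der (insert (fm (.ifz M N P) A) Γ) Δ
  | ifzL2 {Γ Δ M N P A} : Der (insert (fm N A) Γ) Δ → Der (insert (fm P A) Γ) Δ →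
      Der (insert (fm (.ifz M N P) A) Γ) Δ
  | okVarR (Γ Δ : Finset Formula) (x : ℕ) : Der Γ (insert (fm (.var x) .ok) Δ)
  | okL {Γ Δ M A} : Der (insert (fm M .ok) Γ) Δ → Der (insert (fm M A) Γ) Δ
  | okR {Γ Δ M A} : Der Γ (insert (fm M A) Δ) → Der Γ (insert (fm M .ok) Δ)
  | okApL1 {Γ Δ M N A} : Der (insert (fm M (.narrow .ok A)) Γ) Δ →
      Der (insert (fm (.app M N) .ok) Γ) Δ
  | okApL2 {Γ Δ M N} : Der (insert (fm N .ok) Γ) Δ → Der (insert (fm (.app M N) .ok) Γ) Δ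
  | okSL {Γ Δ M} : Der (insert (fm M .nat) Γ) Δ → Der (insert (fm (.succ M) .ok) Γ) Δ
  | okPL {Γ Δ M} : Der (insert (fm M .nat) Γ) Δ → Der (insert (fm (.pred M) .ok) Γ) Δ
  | okPrL1 {Γ Δ M1 M2} : Der (insert (fm M1 .ok) Γ) Δ →
      Der (insert (fm (.pair M1 M2) .ok) Γ) Δ
  | okPrL2 {Γ Δ M1 M2} : Der (insert (fm M2 .ok) Γ) Δ →
      Der (insert (fm (.pair M1 M2) .ok) Γ) Δ

/-- Simultaneous substitution by a valuation (total substitution); suitable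
since valuations map variables to closed terms. -/
def msubst (θ : ℕ → Tm) : Tm → Tm
  | .var y => θ y
  | .zero => .zero
  | .succ M => .succ (msubst θ M)
  | .pred M => .pred (msubst θ M)
  | .ifz M P Q => .ifz (msubst θ M) (msubst θ P) (msubst θ Q)
  | .abs y M => .abs y (msubst (Function.update θ y (.var y)) M)
  | .app M P => .app (msubst θ M) (msubst θ P)
  | .fix y M => .fix y (msubst (Function.update θ y (.var y)) M)
  | .pair M P => .pair (msubst θ M) (msubst θ P)
  | .lett y z M P =>
      .lett y z (msubst θ M)
        (msubst (Function.update (Function.update θ y (.var y)) z (.var z)) P)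

/-- A valuation: a substitution by closed terms. -/
def ClosedVal (θ : ℕ → Tm) : Prop := ∀ x, ClosedTm (θ x)

/-- `θ` satisfies `M : A` on the left: `Mθ ∈ T⟦A⟧`. -/
def SatL (θ : ℕ → Tm) (φ : Formula) : Prop := TSem (Sem φ.ty) (msubst θ φ.tm)

/-- `θ` satisfies `M : A` on the right: `Mθ ∈ T̄⟦A⟧`. -/
def SatR (θ : ℕ → Tm) (φ : Formula) : Prop := TBarSem (Sem φ.ty) (msubst θ φ.tm)

/-- Truth of a judgement: `Γ ⊨ Δ`. -/
def Models (Γ Δ : Finset Formula) : Prop :=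
  ∀ θ : ℕ → Tm, ClosedVal θ → (∀ φ ∈ Γ, SatL θ φ) → ∃ φ ∈ Δ, SatR θ φ

/-!
Compare `D[fixⁿ x.M/z]` with `D[fix x.M/z]` through the relation `Approx x M n`: replace
occurrences of `fix x.M` by approximants of index at least `n`. A reduction step of the original
is matched by reduction of the approximation, at the cost of one level of the index when the step
unfolds `fix x.M`; conversely, an approximation can step only where the original can. So once `n`
exceeds the length of the original's reduction to a normal form, the approximation reaches a
normal form approximating it. An `F`-value contains no fixpoint, which gives (ii). For (i), failure
of `T̄⟦A⟧` at a value is transferred by induction on `A`: the `→` case uses the statement for the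
codomain at the witnessing argument, the `⇝` case uses (ii).
-/

lemma numeral_injective : Function.Injective numeral := by
  intro m n h
  induction m generalizing n with
  | zero => cases n <;> simp_all [numeral]
  | succ m ih =>
    cases n with
    | zero => simp [numeral] at h
    | succ n => exact congrArg _ (ih (Tm.succ.inj h))

@[simp] lemma fv_numeral (n : ℕ) : fv (numeral n) = ∅ := by
  induction n <;> simp_all [numeral, fv]

lemma subst_eq_self_of_notMem_fv {y : ℕ} {N T : Tm} (h : y ∉ fv T) : subst y N T = T := by
  induction T <;> grind [subst, fv]

lemma ClosedTm.subst_eq {T : Tm} (h : ClosedTm T) (y : ℕ) (N : Tm) : subst y N T = T :=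
  subst_eq_self_of_notMem_fv (by simp [h.symm ▸ Finset.notMem_empty y])

lemma fv_subst_subset (y : ℕ) (N T : Tm) : fv (subst y N T) ⊆ fv T \ {y} ∪ fv N := by
  induction T <;> grind [subst, fv]

lemma ClosedTm.subst_of_abs {y : ℕ} {B W : Tm} (hB : ClosedTm (.abs y B)) (hW : ClosedTm W) :
    ClosedTm (subst y W B) :=
  Finset.subset_empty.1 <| (fv_subst_subset y W B).trans <| by
    simp_all [ClosedTm, fv]

lemma numeral_not_step (n : ℕ) {N : Tm} : ¬ Step (numeral n) N := by
  induction n generalizing N with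
  | zero => rintro ⟨⟩
  | succ n ih => intro h; cases h with | succ_ctx h => exact ih h

lemma IsValue.not_step {V N : Tm} (hV : IsValue V) : ¬ Step V N := by
  induction hV generalizing N with
  | num n => exact numeral_not_step n
  | pair _ _ ihV ihW =>
    intro h
    cases h with
    | pair_left h => exact ihV h
    | pair_right _ h => exact ihW h
  | _ => rintro ⟨⟩

lemma IsValue.normalForm {V : Tm} (hV : IsValue V) : NormalForm V :=
  fun ⟨_, h⟩ => hV.not_step h

lemma IsValue.of_pair {V W : Tm} (h : IsValue (.pair V W)) : IsValue V ∧ IsValue W := by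
  generalize hU : Tm.pair V W = U at h
  cases h with
  | num n => cases n <;> simp [numeral] at hU
  | pair hV hW => cases hU; exact ⟨hV, hW⟩
  | _ => simp at hU

lemma not_isValue_fix {y : ℕ} {B : Tm} : ¬ IsValue (.fix y B) := by
  intro h
  generalize hU : Tm.fix y B = U at h
  cases h with
  | num n => cases n <;> simp [numeral] at hU
  | _ => simp at hU

lemma step_deterministic {M N₁ N₂ : Tm} (h₁ : Step M N₁) (h₂ : Step M N₂) :
    N₁ = N₂ := by
  induction h₁ generalizing N₂ with
  | @ifz_succ n =>
    generalize hn : numeral (n + 1) = V at h₂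
    cases h₂ with
    | ifz_zero => exact absurd (numeral_injective hn) n.succ_ne_zero
    | ifz_succ => rfl
    | ifz_ctx h => exact absurd (hn ▸ h) (numeral_not_step _)
  | @pred_succ n =>
    generalize hn : numeral (n + 1) = V at h₂
    cases h₂ with
    | pred_zero => exact absurd (numeral_injective hn) n.succ_ne_zero
    | pred_succ => exact Tm.succ.inj hn
    | pred_ctx h => exact absurd (hn ▸ h) (numeral_not_step _)
  | _ =>
    cases h₂
    all_goals first
      | rfl
      | (congr 1; solve_by_elim)
      | exfalso; solve_by_elim [IsValue.not_step, numeral_not_step, IsValue.pair, IsValue.abs]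

lemma Steps.eq_of_normalForm {M N₁ N₂ : Tm} (h₁ : Steps M N₁) (h₂ : Steps M N₂)
    (hn₁ : NormalForm N₁) (hn₂ : NormalForm N₂) : N₁ = N₂ := by
  induction h₁ using Relation.ReflTransGen.head_induction_on with
  | refl =>
    rcases h₂.cases_head with rfl | ⟨_, h, -⟩
    exacts [rfl, absurd ⟨_, h⟩ hn₁]
  | head h _ ih =>
    rcases h₂.cases_head with rfl | ⟨_, h', hs⟩
    exacts [absurd ⟨_, h⟩ hn₂, ih (step_deterministic h' h ▸ hs)]

lemma Step.fv_subset {M N : Tm} (h : Step M N) : fv N ⊆ fv M := by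
  induction h <;> grind [fv, fv_numeral, fv_subst_subset]

lemma Steps.closedTm {M N : Tm} (h : Steps M N) (hM : ClosedTm M) : ClosedTm N := by
  induction h with
  | refl => exact hM
  | tail _ h ih => exact Finset.subset_empty.1 (ih ▸ h.fv_subset)

lemma Steps.lift (f : Tm → Tm) (hf : ∀ {A B : Tm}, Step A B → Step (f A) (f B)) {P Q : Tm}
    (h : Steps P Q) : Steps (f P) (f Q) :=
  Relation.ReflTransGen.lift f (fun _ _ => hf) _ _ h

/-- The approximant enters through an equation so that `cases` can invert on either side. -/
inductive Approx (x : ℕ) (M : Tm) : ℕ → Tm → Tm → Prop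
  | fixApprox {n m : ℕ} {P : Tm} : n ≤ m → P = fixApprox x M m → Approx x M n P (.fix x M)
  | var {n : ℕ} (y : ℕ) : Approx x M n (.var y) (.var y)
  | zero {n : ℕ} : Approx x M n .zero .zero
  | succ {n P Q} : Approx x M n P Q → Approx x M n (.succ P) (.succ Q)
  | pred {n P Q} : Approx x M n P Q → Approx x M n (.pred P) (.pred Q)
  | ifz {n P Q P₁ Q₁ P₂ Q₂} : Approx x M n P Q → Approx x M n P₁ Q₁ →
      Approx x M n P₂ Q₂ → Approx x M n (.ifz P P₁ P₂) (.ifz Q Q₁ Q₂)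
  | abs {n P Q} (y : ℕ) : Approx x M n P Q → Approx x M n (.abs y P) (.abs y Q)
  | app {n P Q P₁ Q₁} : Approx x M n P Q → Approx x M n P₁ Q₁ →
      Approx x M n (.app P P₁) (.app Q Q₁)
  | fix {n P Q} (y : ℕ) : Approx x M n P Q → Approx x M n (.fix y P) (.fix y Q)
  | pair {n P Q P₁ Q₁} : Approx x M n P Q → Approx x M n P₁ Q₁ →
      Approx x M n (.pair P P₁) (.pair Q Q₁)
  | lett {n P Q P₁ Q₁} (a b : ℕ) : Approx x M n P Q → Approx x M n P₁ Q₁ →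
      Approx x M n (.lett a b P P₁) (.lett a b Q Q₁)

lemma closedTm_fixApprox {x : ℕ} {M : Tm} (hM : ClosedTm (.fix x M)) (m : ℕ) :
    ClosedTm (fixApprox x M m) := by
  induction m with
  | zero => simp [fixApprox, divTm, ClosedTm, fv]
  | succ m ih =>
    refine Finset.subset_empty.1 <| (fv_subst_subset x _ M).trans ?_
    simp_all [ClosedTm, fv]

namespace Approx

variable {x : ℕ} {M : Tm}

lemma refl (n : ℕ) (T : Tm) : Approx x M n T T := by
  induction T <;> constructor <;> assumption

lemma mono {m n : ℕ} {P Q : Tm} (hmn : m ≤ n) (h : Approx x M n P Q) : Approx x M m P Q := by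
  induction h with
  | fixApprox h hP => exact fixApprox (hmn.trans h) hP
  | _ => constructor <;> assumption

lemma subst (hM : ClosedTm (.fix x M)) {n : ℕ} {P Q : Tm} (hPQ : Approx x M n P Q) (y : ℕ)
    {V W : Tm} (hVW : Approx x M n V W) :
    Approx x M n (PCF.subst y V P) (PCF.subst y W Q) := by
  induction hPQ with
  | fixApprox h hP =>
    subst hP
    rw [(closedTm_fixApprox hM _).subst_eq, hM.subst_eq]
    exact fixApprox h rfl
  | var z => by_cases hz : z = y <;> simp [PCF.subst, hz, hVW, refl]
  | abs z h ih => by_cases hz : z = y <;> simp [PCF.subst, hz] <;> constructor <;> assumption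
  | fix z h ih => by_cases hz : z = y <;> simp [PCF.subst, hz] <;> constructor <;> assumption
  | lett a b h h₁ ih ih₁ =>
    by_cases hab : a = y ∨ b = y <;> simp only [PCF.subst, hab] <;> constructor <;> assumption
  | _ => constructor <;> assumption

lemma fv_eq (hM : ClosedTm (.fix x M)) {n : ℕ} {P Q : Tm} (h : Approx x M n P Q) :
    fv P = fv Q := by
  induction h with
  | fixApprox _ hP => rw [hP, closedTm_fixApprox hM, hM]
  | _ => simp_all [fv]

lemma left_eq_of_numeral {n k : ℕ} {P : Tm} (h : Approx x M n P (numeral k)) :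
    P = numeral k := by
  induction k generalizing P with
  | zero => cases h; rfl
  | succ k ih => cases h with | succ h => rw [ih h]; rfl

lemma isValue_left {n : ℕ} {P Q : Tm} (hQ : IsValue Q) (h : Approx x M n P Q) :
    IsValue P := by
  induction hQ generalizing P with
  | var y => cases h; exact .var y
  | num k => rw [left_eq_of_numeral h]; exact .num k
  | pair _ _ ihV ihW => cases h with | pair h₁ h₂ => exact .pair (ihV h₁) (ihW h₂)
  | abs y => cases h with | abs _ h => exact .abs _ _

lemma left_eq_of_fSem {F : FTy} {n : ℕ} {P V : Tm} (hV : FSem F V) (h : Approx x M n P V) :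
    P = V := by
  induction F generalizing P V with
  | nat => obtain ⟨k, rfl⟩ := hV; exact left_eq_of_numeral h
  | prod F₁ F₂ ih₁ ih₂ =>
    obtain ⟨V₁, V₂, rfl, h₁, h₂⟩ := hV
    cases h with | pair hP₁ hP₂ => rw [ih₁ h₁ hP₁, ih₂ h₂ hP₂]

lemma right_eq_numeral_or_step {n k : ℕ} {Q : Tm} (h : Approx x M n (numeral k) Q) :
    Q = numeral k ∨ ∃ Q', Step Q Q' := by
  induction k generalizing Q with
  | zero =>
    cases h with
    | fixApprox => exact .inr ⟨_, .fix_step⟩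
    | zero => exact .inl rfl
  | succ k ih =>
    cases h with
    | fixApprox => exact .inr ⟨_, .fix_step⟩
    | succ h =>
      rcases ih h with rfl | ⟨_, hs⟩
      exacts [.inl rfl, .inr ⟨_, .succ_ctx hs⟩]

lemma right_isValue_or_step {n : ℕ} {P Q : Tm} (hP : IsValue P) (h : Approx x M n P Q) :
    IsValue Q ∨ ∃ Q', Step Q Q' := by
  induction hP generalizing Q with
  | num k => rcases right_eq_numeral_or_step h with rfl | hQ; exacts [.inl (.num k), .inr hQ]
  | pair _ _ ihV ihW =>
    cases h with
    | fixApprox => exact .inr ⟨_, .fix_step⟩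
    | pair h₁ h₂ =>
      rcases ihV h₁ with hQ₁ | ⟨_, hs⟩
      · rcases ihW h₂ with hQ₂ | ⟨_, hs⟩
        exacts [.inl (.pair hQ₁ hQ₂), .inr ⟨_, .pair_right hQ₁ hs⟩]
      · exact .inr ⟨_, .pair_left hs⟩
  | var y =>
    cases h with
    | fixApprox => exact .inr ⟨_, .fix_step⟩
    | var => exact .inl (.var y)
  | abs y =>
    cases h with
    | fixApprox => exact .inr ⟨_, .fix_step⟩
    | abs => exact .inl (.abs y _)

/-- Unfolding `fix x.M` against an approximant costs no step on the left, only one level of the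
index. -/
lemma simulate_step (hM : ClosedTm (.fix x M)) {n : ℕ} {P Q Q' : Tm}
    (h : Approx x M (n + 1) P Q) (hs : Step Q Q') :
    ∃ P', Steps P P' ∧ Approx x M n P' Q' := by
  have down {P Q : Tm} : Approx x M (n + 1) P Q → Approx x M n P Q := mono n.le_succ
  induction hs generalizing P with
  | ifz_zero =>
    cases h with | ifz h₀ h₁ _ =>
    rw [left_eq_of_numeral h₀]
    exact ⟨_, .single .ifz_zero, down h₁⟩
  | ifz_succ =>
    cases h with | ifz h₀ _ h₂ =>
    rw [left_eq_of_numeral h₀]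
    exact ⟨_, .single .ifz_succ, down h₂⟩
  | lett_beta hV hW =>
    cases h with | lett _ _ hVW hB =>
    cases hVW with | pair h₁ h₂ =>
    exact ⟨_, .single (.lett_beta (isValue_left hV h₁) (isValue_left hW h₂)),
      (down hB).subst hM _ (down h₁) |>.subst hM _ (down h₂)⟩
  | fix_step =>
    cases h with
    | @fixApprox m _ hm hP =>
      obtain ⟨m, rfl⟩ : ∃ m', m = m' + 1 := ⟨m - 1, by omega⟩
      exact ⟨P, .refl, hP ▸ (refl n M).subst hM x (.fixApprox (by omega) rfl)⟩
    | fix _ h => exact ⟨_, .single .fix_step, (down h).subst hM _ (.fix _ (down h))⟩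
  | pred_zero =>
    cases h with | pred h =>
    rw [left_eq_of_numeral h]
    exact ⟨_, .single .pred_zero, refl _ _⟩
  | pred_succ =>
    cases h with | pred h =>
    rw [left_eq_of_numeral h]
    exact ⟨_, .single .pred_succ, refl _ _⟩
  | beta hV =>
    cases h with | app hf ha =>
    cases hf with | abs _ hB =>
    exact ⟨_, .single (.beta (isValue_left hV ha)), (down hB).subst hM _ (down ha)⟩
  | succ_ctx _ ih =>
    cases h with | succ h =>
    obtain ⟨P', hs, h'⟩ := ih h
    exact ⟨_, hs.lift Tm.succ .succ_ctx, .succ h'⟩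
  | pred_ctx _ ih =>
    cases h with | pred h =>
    obtain ⟨P', hs, h'⟩ := ih h
    exact ⟨_, hs.lift Tm.pred .pred_ctx, .pred h'⟩
  | pair_left _ ih =>
    cases h with | pair h₁ h₂ =>
    obtain ⟨P', hs, h'⟩ := ih h₁
    exact ⟨_, hs.lift (Tm.pair · _) .pair_left, .pair h' (down h₂)⟩
  | pair_right hV _ ih =>
    cases h with | pair h₁ h₂ =>
    obtain ⟨P', hs, h'⟩ := ih h₂
    exact ⟨_, hs.lift (Tm.pair _ ·) (.pair_right (isValue_left hV h₁)),
      .pair (down h₁) h'⟩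
  | lett_ctx _ ih =>
    cases h with | lett _ _ h₁ h₂ =>
    obtain ⟨P', hs, h'⟩ := ih h₁
    exact ⟨_, hs.lift (Tm.lett _ _ · _) .lett_ctx, .lett _ _ h' (down h₂)⟩
  | ifz_ctx _ ih =>
    cases h with | ifz h₀ h₁ h₂ =>
    obtain ⟨P', hs, h'⟩ := ih h₀
    exact ⟨_, hs.lift (Tm.ifz · _ _) .ifz_ctx, .ifz h' (down h₁) (down h₂)⟩
  | app_right _ ih =>
    cases h with | app hf ha =>
    cases hf with | abs _ hB =>
    obtain ⟨P', hs, h'⟩ := ih ha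
    exact ⟨_, hs.lift (Tm.app (.abs _ _) ·) .app_right, .app (.abs _ (down hB)) h'⟩
  | app_left _ ih =>
    cases h with | app h₁ h₂ =>
    obtain ⟨P', hs, h'⟩ := ih h₁
    exact ⟨_, hs.lift (Tm.app · _) .app_left, .app h' (down h₂)⟩

lemma simulate_steps (hM : ClosedTm (.fix x M)) {Q Q' : Tm} (hs : Steps Q Q') :
    ∃ k, ∀ n P, Approx x M (n + k) P Q → ∃ P', Steps P P' ∧ Approx x M n P' Q' := by
  induction hs with
  | refl => exact ⟨0, fun n P h => ⟨P, .refl, h⟩⟩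
  | tail _ hs ih =>
    obtain ⟨k, hk⟩ := ih
    refine ⟨k + 1, fun n P h => ?_⟩
    obtain ⟨P₁, hs₁, h₁⟩ := hk (n + 1) P (by rwa [Nat.add_right_comm])
    obtain ⟨P₂, hs₂, h₂⟩ := simulate_step hM h₁ hs
    exact ⟨P₂, hs₁.trans hs₂, h₂⟩

lemma progress {n : ℕ} {P P' Q : Tm} (h : Approx x M n P Q) (hs : Step P P') :
    ∃ Q', Step Q Q' := by
  induction hs generalizing Q with
  | ifz_zero | ifz_succ =>
    cases h with
    | fixApprox => exact ⟨_, .fix_step⟩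
    | ifz h₀ =>
      rcases right_eq_numeral_or_step h₀ with rfl | ⟨_, hs⟩
      exacts [⟨_, by constructor⟩, ⟨_, .ifz_ctx hs⟩]
  | pred_zero | pred_succ =>
    cases h with
    | fixApprox => exact ⟨_, .fix_step⟩
    | pred h₀ =>
      rcases right_eq_numeral_or_step h₀ with rfl | ⟨_, hs⟩
      exacts [⟨_, by constructor⟩, ⟨_, .pred_ctx hs⟩]
  | lett_beta hV hW =>
    cases h with
    | fixApprox => exact ⟨_, .fix_step⟩
    | lett _ _ hVW =>
      cases hVW with
      | fixApprox => exact ⟨_, .lett_ctx .fix_step⟩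
      | pair h₁ h₂ =>
        rcases right_isValue_or_step hV h₁ with hV' | ⟨_, hs⟩
        · rcases right_isValue_or_step hW h₂ with hW' | ⟨_, hs⟩
          exacts [⟨_, .lett_beta hV' hW'⟩, ⟨_, .lett_ctx (.pair_right hV' hs)⟩]
        · exact ⟨_, .lett_ctx (.pair_left hs)⟩
  | fix_step => cases h <;> exact ⟨_, .fix_step⟩
  | beta hV =>
    cases h with
    | fixApprox => exact ⟨_, .fix_step⟩
    | app hf ha =>
      cases hf with
      | fixApprox => exact ⟨_, .app_left .fix_step⟩
      | abs =>
        rcases right_isValue_or_step hV ha with hV' | ⟨_, hs⟩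
        exacts [⟨_, .beta hV'⟩, ⟨_, .app_right hs⟩]
  | app_right _ ih =>
    cases h with
    | fixApprox => exact ⟨_, .fix_step⟩
    | app hf ha =>
      cases hf with
      | fixApprox => exact ⟨_, .app_left .fix_step⟩
      | abs => obtain ⟨_, hs⟩ := ih ha; exact ⟨_, .app_right hs⟩
  | pair_right hV _ ih =>
    cases h with
    | fixApprox => exact ⟨_, .fix_step⟩
    | pair h₁ h₂ =>
      rcases right_isValue_or_step hV h₁ with hV' | ⟨_, hs⟩
      · obtain ⟨_, hs⟩ := ih h₂; exact ⟨_, .pair_right hV' hs⟩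
      · exact ⟨_, .pair_left hs⟩
  | succ_ctx _ ih | pred_ctx _ ih | pair_left _ ih | lett_ctx _ ih | ifz_ctx _ ih | app_left _ ih =>
    cases h
    case fixApprox => exact ⟨_, .fix_step⟩
    all_goals
      obtain ⟨_, hs⟩ := ih (by assumption)
      exact ⟨_, by constructor; exact hs⟩

lemma normalForm_left {n : ℕ} {P Q : Tm} (h : Approx x M n P Q) (hQ : NormalForm Q) :
    NormalForm P :=
  fun ⟨_, hs⟩ => hQ (h.progress hs)

end Approx

def StableUnderApprox (x : ℕ) (M : Tm) (S : Tm → Prop) (N : Tm) : Prop :=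
  ∃ k, ∀ P, Approx x M k P N → S P

section Stability

variable {x : ℕ} {M : Tm}

lemma StableUnderApprox.eventually_subst_fixApprox (hM : ClosedTm (.fix x M)) {S : Tm → Prop}
    {z : ℕ} {D : Tm} (h : StableUnderApprox x M S (subst z (.fix x M) D)) :
    ∃ n₀, ∀ n ≥ n₀, S (subst z (fixApprox x M n) D) :=
  let ⟨k, hk⟩ := h
  ⟨k, fun _ hn => hk _ ((Approx.refl k D).subst hM z (.fixApprox hn rfl))⟩

lemma TBarSem.isValue_of_steps {S : Tm → Prop} {P P' : Tm} (h : TBarSem S P) (hs : Steps P P')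
    (hP' : NormalForm P') : IsValue P' ∧ S P' := by
  rcases h with ⟨-, V, hV, hVv, hVS⟩ | ⟨-, hdiv⟩
  · obtain rfl := hs.eq_of_normalForm hV hP' hVv.normalForm
    exact ⟨hVv, hVS⟩
  · exact absurd ⟨P', hs, hP'⟩ hdiv

lemma stableUnderApprox_tSem_fSem (hM : ClosedTm (.fix x M)) {F : FTy} {N : Tm}
    (hN : TSem (FSem F) N) : StableUnderApprox x M (TSem (FSem F)) N := by
  obtain ⟨hNc, V, hs, hV, hVF⟩ := hN
  obtain ⟨k, hk⟩ := Approx.simulate_steps hM hs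
  refine ⟨k, fun P h => ?_⟩
  obtain ⟨P', hs', h'⟩ := hk 0 P (by rwa [zero_add])
  obtain rfl := Approx.left_eq_of_fSem hVF h'
  exact ⟨(h.fv_eq hM).trans hNc, P', hs', hV, hVF⟩

def RefutationsStable (x : ℕ) (M : Tm) (S : Tm → Prop) : Prop :=
  ∀ R, IsValue R → ClosedTm R → ¬ S R → StableUnderApprox x M (¬ S ·) R

lemma stableUnderApprox_not_tBarSem (hM : ClosedTm (.fix x M)) {S : Tm → Prop}
    (hS : RefutationsStable x M S) {N : Tm} (hN : ClosedTm N) (hNS : ¬ TBarSem S N) :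
    StableUnderApprox x M (¬ TBarSem S ·) N := by
  obtain ⟨R, hNR, hR⟩ : ∃ R, Steps N R ∧ NormalForm R :=
    not_not.mp fun hdiv => hNS (.inr ⟨hN, hdiv⟩)
  obtain ⟨k, hk⟩ := Approx.simulate_steps hM hNR
  have hvalue {j P} (h : Approx x M (j + k) P N) (hP : TBarSem S P) :
      ∃ P', Approx x M j P' R ∧ IsValue P' ∧ S P' :=
    let ⟨P', hs, h'⟩ := hk j P h
    ⟨P', h', hP.isValue_of_steps hs (h'.normalForm_left hR)⟩
  by_cases hRv : IsValue R
  · have hRS : ¬ S R := fun hRS => hNS (.inl ⟨hN, R, hNR, hRv, hRS⟩)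
    obtain ⟨j, hj⟩ := hS R hRv (hNR.closedTm hN) hRS
    refine ⟨j + k, fun P h hP => ?_⟩
    obtain ⟨P', h', -, hP'S⟩ := hvalue h hP
    exact hj P' h' hP'S
  · refine ⟨0 + k, fun P h hP => ?_⟩
    obtain ⟨P', h', hP', -⟩ := hvalue h hP
    rcases h'.right_isValue_or_step hP' with hRv' | ⟨_, hs⟩
    exacts [hRv hRv', hR ⟨_, hs⟩]

namespace RefutationsStable

lemma nat : RefutationsStable x M (Sem .nat) := by
  refine fun R hR _ hRA => ⟨0, fun P h ⟨k, hP⟩ => ?_⟩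
  subst hP
  rcases Approx.right_eq_numeral_or_step h with rfl | ⟨_, hs⟩
  exacts [hRA ⟨k, rfl⟩, hR.not_step hs]

lemma ok : RefutationsStable x M (Sem .ok) :=
  fun _ hR hRc hRA => absurd ⟨hRc, hR⟩ hRA

lemma prod {B C : Ty} (hB : RefutationsStable x M (Sem B)) (hC : RefutationsStable x M (Sem C)) :
    RefutationsStable x M (Sem (.prod B C)) := by
  intro R hR hRc hRA
  by_cases hpair : ∃ R₁ R₂, R = .pair R₁ R₂
  · obtain ⟨R₁, R₂, rfl⟩ := hpair
    obtain ⟨hR₁, hR₂⟩ := hR.of_pair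
    obtain ⟨hc₁, hc₂⟩ : ClosedTm R₁ ∧ ClosedTm R₂ := by simpa [ClosedTm, fv] using hRc
    rcases not_and_or.mp fun hBC => hRA ⟨_, _, rfl, hBC⟩ with hRB | hRC
    · obtain ⟨k, hk⟩ := hB R₁ hR₁ hc₁ hRB
      refine ⟨k, fun P h ⟨V, W, hP, hV, _⟩ => ?_⟩
      subst hP
      cases h with | pair h₁ _ => exact hk _ h₁ hV
    · obtain ⟨k, hk⟩ := hC R₂ hR₂ hc₂ hRC
      refine ⟨k, fun P h ⟨V, W, hP, _, hW⟩ => ?_⟩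
      subst hP
      cases h with | pair _ h₂ => exact hk _ h₂ hW
  · refine ⟨0, fun P h ⟨_, _, hP, _⟩ => ?_⟩
    subst hP
    cases h with
    | fixApprox => exact not_isValue_fix hR
    | pair => exact hpair ⟨_, _, rfl⟩

lemma of_abs {S : Tm → Prop} (hS : ∀ P, S P → ∃ y B, P = .abs y B)
    (habs : ∀ y B₀, ClosedTm (.abs y B₀) → ¬ S (.abs y B₀) →
      StableUnderApprox x M (¬ S ·) (.abs y B₀)) :
    RefutationsStable x M S := by
  intro R hR hRc hRS
  by_cases hRabs : ∃ y B₀, R = .abs y B₀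
  · obtain ⟨y, B₀, rfl⟩ := hRabs
    exact habs y B₀ hRc hRS
  · refine ⟨0, fun P h hP => ?_⟩
    obtain ⟨_, _, rfl⟩ := hS P hP
    cases h with
    | fixApprox => exact not_isValue_fix hR
    | abs => exact hRabs ⟨_, _, rfl⟩

lemma arrow (hM : ClosedTm (.fix x M)) {B C : Ty} (hC : RefutationsStable x M (Sem C)) :
    RefutationsStable x M (Sem (.arrow B C)) := by
  refine of_abs (fun _ ⟨y, B, hP, _⟩ => ⟨y, B, hP⟩) fun y B₀ hRc hRA => ?_
  obtain ⟨W, hWc, hW, hWB, hWC⟩ : ∃ W, ClosedTm W ∧ IsValue W ∧ Sem B W ∧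
      ¬ TBarSem (Sem C) (subst y W B₀) := by
    by_contra! h
    exact hRA ⟨y, B₀, rfl, hRc, h⟩
  obtain ⟨k, hk⟩ := stableUnderApprox_not_tBarSem hM hC (hRc.subst_of_abs hWc) hWC
  refine ⟨k, fun P h ⟨_, B₁, hP, _, hP'⟩ => ?_⟩
  subst hP
  cases h with | abs _ h => exact hk _ (h.subst hM y (.refl k W)) (hP' W hWc hW hWB)

lemma narrow (hM : ClosedTm (.fix x M)) {B : Ty} {F : FTy} :
    RefutationsStable x M (Sem (.narrow B F)) := by
  refine of_abs (fun _ ⟨y, B, hP, _⟩ => ⟨y, B, hP⟩) fun y B₀ hRc hRA => ?_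
  obtain ⟨W, hWc, hW, hWF, hWB⟩ : ∃ W, ClosedTm W ∧ IsValue W ∧
      TSem (FSem F) (subst y W B₀) ∧ ¬ Sem B W := by
    by_contra! h
    exact hRA ⟨y, B₀, rfl, hRc, h⟩
  obtain ⟨k, hk⟩ := stableUnderApprox_tSem_fSem hM hWF
  refine ⟨k, fun P h ⟨_, B₁, hP, _, hP'⟩ => ?_⟩
  subst hP
  cases h with | abs _ h => exact hWB (hP' W hWc hW (hk _ (h.subst hM y (.refl k W))))

end RefutationsStable

lemma refutationsStable_sem (hM : ClosedTm (.fix x M)) (A : Ty) :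
    RefutationsStable x M (Sem A) := by
  induction A with
  | nat => exact .nat
  | prod _ _ hB hC => exact .prod hB hC
  | arrow _ _ _ hC => exact .arrow hM hC
  | narrow => exact .narrow hM
  | ok => exact .ok

end Stability

/-- Types furnish finite counterexamples for fixpoints. -/
theorem finite_counterexamples (D : Tm) (z : ℕ) (x : ℕ) (M : Tm)
    (hfix : ClosedTm (.fix x M)) (hcl : ClosedTm (subst z (.fix x M) D)) :
    (∀ A : Ty, ¬ TBarSem (Sem A) (subst z (.fix x M) D) →
      ∃ n₀ : ℕ, ∀ n ≥ n₀, ¬ TBarSem (Sem A) (subst z (fixApprox x M n) D)) ∧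
    (∀ F : FTy, TSem (FSem F) (subst z (.fix x M) D) →
      ∃ n₀ : ℕ, ∀ n ≥ n₀, TSem (FSem F) (subst z (fixApprox x M n) D)) :=
  ⟨fun A hA => (stableUnderApprox_not_tBarSem hfix (refutationsStable_sem hfix A) hcl hA)
      |>.eventually_subst_fixApprox hfix,
    fun _ hF => (stableUnderApprox_tSem_fSem hfix hF).eventually_subst_fixApprox hfix⟩

end PCF
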